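/- arXiv:2210.11829 — 3 statements merged into one kernel-verified Lean document; each statement's English description precedes it below -/
import Mathlib

section
/- Let C be a type and let σ : C ≃ C be an involution (σ ∘ σ = id) with σ ≠ id. Inside the permutation group of C × C, consider σ₁ : (p,q) ↦ (σ(p), q), σ₂ : (p,q) ↦ (p, σ(q)), and the swap τ : (p,q) ↦ (q,p), and let G := ⟨σ₁, σ₂, τ⟩ ≤ Perm(C × C). Then the center of G is the subgroup of G generated by the composition σ₁ ∘ σ₂, i.e. by the permutation (p,q) ↦ (σ(p), σ(q)). -/
/-- Let `C` be a type and `σ : C ≃ C` an involution with `σ ≠ id`. In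
`Equiv.Perm (C × C)` consider `σ₁ = (p,q) ↦ (σ p, q)`, `σ₂ = (p,q) ↦ (p, σ q)` and the swap
`τ = (p,q) ↦ (q,p)`, and let `G = ⟨σ₁, σ₂, τ⟩`. Then the center of `G` is the subgroup of `G`
generated by the composition `σ₁ ∘ σ₂`, i.e. by the permutation `(p,q) ↦ (σ p, σ q)`. -/
theorem stmt1 (C : Type*) (σ : Equiv.Perm C)
    (hinv : ∀ x, σ (σ x) = x) (hne : σ ≠ Equiv.refl C)
    (G : Subgroup (Equiv.Perm (C × C)))
    (hG : G = Subgroup.closure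
      ({Equiv.prodCongr σ (Equiv.refl C), Equiv.prodCongr (Equiv.refl C) σ,
        Equiv.prodComm C C} : Set (Equiv.Perm (C × C))))
    (hmem : Equiv.prodCongr σ σ ∈ G) :
    Subgroup.center G = Subgroup.closure ({⟨Equiv.prodCongr σ σ, hmem⟩} : Set G) := by
  obtain ⟨x, hx⟩ : ∃ x, σ x ≠ x := by
    by_contra h
    push_neg at h
    exact hne (Equiv.ext h)
  have hA : Equiv.prodCongr σ (Equiv.refl C) ∈ G := by
    rw [hG]; exact Subgroup.subset_closure (by simp)
  have hT : Equiv.prodComm C C ∈ G := by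
    rw [hG]; exact Subgroup.subset_closure (by simp)
  -- the "diagonal" element commutes with everything in G
  have key : ∀ g ∈ G, Equiv.prodCongr σ σ * g = g * Equiv.prodCongr σ σ := by
    intro g hg
    rw [hG] at hg
    induction hg using Subgroup.closure_induction with
    | mem g hg =>
      simp only [Set.mem_insert_iff, Set.mem_singleton_iff] at hg
      rcases hg with rfl | rfl | rfl <;>
        exact Equiv.ext fun pq => by
          obtain ⟨p, q⟩ := pq
          simp [Equiv.Perm.mul_apply]
    | one => simp
    | mul g h _ _ ihg ihh => rw [← mul_assoc, ihg, mul_assoc, ihh, mul_assoc]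
    | inv g _ ih => exact (Commute.inv_right ih).eq
  -- normal form for elements of G
  have form : ∀ g ∈ G, ∃ a b c : Bool, ∀ p q : C,
      g (p, q) = ((bif a then ⇑σ else id) (bif c then q else p),
                  (bif b then ⇑σ else id) (bif c then p else q)) := by
    intro g hg
    rw [hG] at hg
    induction hg using Subgroup.closure_induction with
    | mem g hg =>
      simp only [Set.mem_insert_iff, Set.mem_singleton_iff] at hg
      rcases hg with rfl | rfl | rfl
      · exact ⟨true, false, false, fun p q => by simp⟩
      · exact ⟨false, true, false, fun p q => by simp⟩
      · exact ⟨false, false, true, fun p q => by simp⟩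
    | one => exact ⟨false, false, false, fun p q => by simp⟩
    | mul g h _ _ ihg ihh =>
      obtain ⟨a, b, c, hfg⟩ := ihg
      obtain ⟨a', b', c', hfh⟩ := ihh
      refine ⟨xor a (bif c then b' else a'), xor b (bif c then a' else b'),
        xor c c', fun p q => ?_⟩
      rw [Equiv.Perm.mul_apply, hfh, hfg]
      cases c <;> cases c' <;> cases a <;> cases b <;> cases a' <;> cases b' <;>
        simp [hinv]
    | inv g _ ih =>
      obtain ⟨a, b, c, hfg⟩ := ih
      refine ⟨bif c then b else a, bif c then a else b, c, fun p q => ?_⟩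
      rw [Equiv.Perm.inv_eq_iff_eq, hfg]
      cases c <;> cases a <;> cases b <;> simp [hinv]
  apply le_antisymm
  · -- center ≤ closure of the diagonal
    intro z hz
    obtain ⟨a, b, c, hf⟩ := form z.1 z.2
    have hcA : Equiv.prodCongr σ (Equiv.refl C) * (z : Equiv.Perm (C × C)) =
        (z : Equiv.Perm (C × C)) * Equiv.prodCongr σ (Equiv.refl C) :=
      congrArg Subtype.val (Subgroup.mem_center_iff.mp hz ⟨_, hA⟩)
    have hcT : Equiv.prodComm C C * (z : Equiv.Perm (C × C)) =
        (z : Equiv.Perm (C × C)) * Equiv.prodComm C C :=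
      congrArg Subtype.val (Subgroup.mem_center_iff.mp hz ⟨_, hT⟩)
    cases c with
    | true =>
      exfalso
      have e1 := Equiv.ext_iff.mp hcA (x, x)
      rw [Equiv.Perm.mul_apply, Equiv.Perm.mul_apply, hf x x] at e1
      rw [show (Equiv.prodCongr σ (Equiv.refl C)) (x, x) = (σ x, x) by simp] at e1
      rw [hf (σ x) x] at e1
      have e2 := congrArg Prod.fst e1
      cases a with
      | false => simp at e2; exact hx e2
      | true => simp at e2; exact hx e2
    | false =>
      have e1 := Equiv.ext_iff.mp hcT (x, x)
      rw [Equiv.Perm.mul_apply, Equiv.Perm.mul_apply, hf x x] at e1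
      rw [show (Equiv.prodComm C C) (x, x) = (x, x) from rfl, hf x x] at e1
      have e2 := congrArg Prod.fst e1
      cases a <;> cases b <;> simp at e2
      · -- a = b = false : z = 1
        have hz1 : z = 1 := by
          apply Subtype.ext
          apply Equiv.ext
          rintro ⟨p, q⟩
          simpa using hf p q
        rw [hz1]
        exact Subgroup.one_mem _
      · exact absurd e2 hx
      · exact absurd e2.symm hx
      · -- a = b = true : z = the diagonal
        have hz1 : z = ⟨Equiv.prodCongr σ σ, hmem⟩ := by
          apply Subtype.ext
          apply Equiv.ext
          rintro ⟨p, q⟩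
          simpa using hf p q
        rw [hz1]
        exact Subgroup.subset_closure (Set.mem_singleton _)
  · rw [Subgroup.closure_le]
    intro w hw
    simp only [Set.mem_singleton_iff] at hw
    subst hw
    rw [SetLike.mem_coe, Subgroup.mem_center_iff]
    intro h
    exact Subtype.ext ((key h.1 h.2).symm)
end

section
/- For points of the complex projective line, the assignment φ([s₀:s₁],[t₀:t₁]) := [s₀t₀ : s₁t₁ : s₀t₁ + s₁t₀] is a well-defined map ℙ¹(ℂ) × ℙ¹(ℂ) → ℙ²(ℂ) (its three coordinates never vanish simultaneously when (s₀,s₁) ≠ 0 and (t₀,t₁) ≠ 0), it is surjective, and φ(x,y) = φ(x',y') holds if and only if (x,y) = (x',y') or (x,y) = (y',x'). In other words, φ identifies the quotient of ℙ¹(ℂ) × ℙ¹(ℂ) by the swap involution with ℙ²(ℂ). -/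
/-!
The coordinates `quadCoords s t` are the coefficients of the binary quadratic form
`(s₀X + s₁Y)(t₀X + t₁Y)`, so the map sends a pair of points of `ℙ¹` to the form vanishing
exactly there. Every binary quadratic form over `ℂ` factors, which gives surjectivity. A
product of two linear forms vanishes at the zero `(u₁, -u₀)` of `u₀X + u₁Y` only if one of
its factors is proportional to `u`; applied to each of the four points of two pairs with the
same image, this pins down the fibre.
-/

open Projectivization
open scoped LinearAlgebra.Projectivization

/-- The coordinate assignment `((s₀,s₁),(t₀,t₁)) ↦ (s₀t₀, s₁t₁, s₀t₁ + s₁t₀)`. -/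
def quadCoords (s t : Fin 2 → ℂ) : Fin 3 → ℂ :=
  ![s 0 * t 0, s 1 * t 1, s 0 * t 1 + s 1 * t 0]

theorem Projectivization.mk_eq_mk_iff_mul_eq_mul {K : Type*} [Field K] {v w : Fin 2 → K}
    (hv : v ≠ 0) (hw : w ≠ 0) : mk K v hv = mk K w hw ↔ v 0 * w 1 = v 1 * w 0 := by
  rw [mk_eq_mk_iff']
  constructor
  · rintro ⟨a, rfl⟩
    simp only [Pi.smul_apply, smul_eq_mul]
    ring
  · intro h
    obtain ⟨i, hi⟩ := Function.ne_iff.mp hw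
    refine ⟨v i / w i, funext fun j => ?_⟩
    fin_cases i <;> fin_cases j <;> simp only [Fin.zero_eta, Fin.mk_one, Fin.isValue, Pi.zero_apply, ne_eq,
      Pi.smul_apply, smul_eq_mul] at hi ⊢ <;> field_simp <;>
      first | linear_combination h | linear_combination -h

theorem quadCoords_smul_smul (a b : ℂ) (s t : Fin 2 → ℂ) :
    quadCoords (a • s) (b • t) = (a * b) • quadCoords s t := by
  ext i
  fin_cases i <;> simp only [quadCoords, Fin.zero_eta, Fin.mk_one, Fin.reduceFinMk, Fin.isValue, Matrix.cons_val,
    Matrix.cons_val_zero, Matrix.cons_val_one, Pi.smul_apply, smul_eq_mul] <;> ring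

theorem quadCoords_comm (s t : Fin 2 → ℂ) : quadCoords s t = quadCoords t s := by
  ext i
  fin_cases i <;> simp only [quadCoords, Fin.zero_eta, Fin.mk_one, Fin.reduceFinMk, Fin.isValue, Matrix.cons_val,
    Matrix.cons_val_zero, Matrix.cons_val_one] <;> ring

theorem quadCoords_eq_zero_iff {s t : Fin 2 → ℂ} : quadCoords s t = 0 ↔ s = 0 ∨ t = 0 := by
  refine ⟨fun h => ?_, by rintro (rfl | rfl) <;> ext i <;> fin_cases i <;> simp [quadCoords]⟩
  have h0 : s 0 * t 0 = 0 := by simpa [quadCoords] using congrFun h 0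
  have h1 : s 1 * t 1 = 0 := by simpa [quadCoords] using congrFun h 1
  have h2 : s 0 * t 1 + s 1 * t 0 = 0 := by simpa [quadCoords] using congrFun h 2
  have key : ∀ i j, s i ^ 2 * t j = 0 := by
    intro i j
    fin_cases i <;> fin_cases j <;> simp only [Fin.zero_eta, Fin.mk_one]
    · linear_combination s 0 * h0
    · linear_combination s 0 * h2 - s 1 * h0
    · linear_combination s 1 * h2 - s 0 * h1
    · linear_combination s 1 * h1
  by_contra! hst
  obtain ⟨i, hi⟩ := Function.ne_iff.mp hst.1
  obtain ⟨j, hj⟩ := Function.ne_iff.mp hst.2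
  exact mul_ne_zero (pow_ne_zero 2 hi) hj (key i j)

theorem quadCoords_ne_zero {s t : Fin 2 → ℂ} (hs : s ≠ 0) (ht : t ≠ 0) : quadCoords s t ≠ 0 :=
  quadCoords_eq_zero_iff.not.mpr (not_or.mpr ⟨hs, ht⟩)

theorem exists_quadCoords_eq (w : Fin 3 → ℂ) : ∃ s t, quadCoords s t = w := by
  by_cases hw0 : w 0 = 0
  · refine ⟨![0, 1], ![w 2, w 1], ?_⟩
    ext i
    fin_cases i <;> simp [quadCoords, hw0]
  · obtain ⟨r, hr⟩ := exists_quadratic_eq_zero (b := -w 2) (c := w 1) hw0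
      (IsAlgClosed.exists_eq_mul_self _)
    refine ⟨![1, r], ![w 0, w 2 - w 0 * r], ?_⟩
    ext i
    fin_cases i
    · simp [quadCoords]
    · simp only [quadCoords, Fin.mk_one, Fin.isValue, Matrix.cons_val_one, Matrix.cons_val_zero]
      linear_combination -hr
    · simp only [quadCoords, Fin.reduceFinMk, Fin.isValue, Matrix.cons_val, Matrix.cons_val_zero,
        Matrix.cons_val_one, one_mul]
      ring

theorem mk_quadCoords_eq_of_mk_eq {s t s' t' : Fin 2 → ℂ} {hs : s ≠ 0} {ht : t ≠ 0}
    {hs' : s' ≠ 0} {ht' : t' ≠ 0} (h₁ : mk ℂ s hs = mk ℂ s' hs') (h₂ : mk ℂ t ht = mk ℂ t' ht') :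
    mk ℂ (quadCoords s t) (quadCoords_ne_zero hs ht) =
      mk ℂ (quadCoords s' t') (quadCoords_ne_zero hs' ht') := by
  rw [mk_eq_mk_iff'] at h₁ h₂ ⊢
  obtain ⟨a, rfl⟩ := h₁
  obtain ⟨b, rfl⟩ := h₂
  exact ⟨a * b, (quadCoords_smul_smul a b s' t').symm⟩

noncomputable def quadMap (p : ℙ ℂ (Fin 2 → ℂ) × ℙ ℂ (Fin 2 → ℂ)) : ℙ ℂ (Fin 3 → ℂ) :=
  mk ℂ (quadCoords p.1.rep p.2.rep) (quadCoords_ne_zero p.1.rep_nonzero p.2.rep_nonzero)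

theorem quadMap_mk {s t : Fin 2 → ℂ} (hs : s ≠ 0) (ht : t ≠ 0) :
    quadMap (mk ℂ s hs, mk ℂ t ht) = mk ℂ (quadCoords s t) (quadCoords_ne_zero hs ht) :=
  mk_quadCoords_eq_of_mk_eq (mk_rep _) (mk_rep _)

theorem quadMap_swap (x y : ℙ ℂ (Fin 2 → ℂ)) : quadMap (y, x) = quadMap (x, y) := by
  induction x using Projectivization.ind with | h s hs =>
  induction y using Projectivization.ind with | h t ht =>
  simp only [quadMap_mk, quadCoords_comm t s]

theorem quadMap_surjective : Function.Surjective quadMap := by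
  intro z
  induction z using Projectivization.ind with | h w hw =>
  obtain ⟨s, t, rfl⟩ := exists_quadCoords_eq w
  obtain ⟨hs, ht⟩ := not_or.mp (quadCoords_eq_zero_iff.not.mp hw)
  exact ⟨(mk ℂ s hs, mk ℂ t ht), quadMap_mk hs ht⟩

theorem eq_or_eq_of_quadMap_eq {x y x' y' : ℙ ℂ (Fin 2 → ℂ)}
    (h : quadMap (x, y) = quadMap (x', y')) : x = x' ∨ y = x' := by
  induction x using Projectivization.ind with | h s hs =>
  induction y using Projectivization.ind with | h t ht =>
  induction x' using Projectivization.ind with | h u hu =>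
  induction y' using Projectivization.ind with | h v hv =>
  rw [quadMap_mk, quadMap_mk, mk_eq_mk_iff'] at h
  obtain ⟨k, hk⟩ := h
  have h₀ : k * (u 0 * v 0) = s 0 * t 0 := by simpa [quadCoords] using congrFun hk 0
  have h₁ : k * (u 1 * v 1) = s 1 * t 1 := by simpa [quadCoords] using congrFun hk 1
  have h₂ : k * (u 0 * v 1 + u 1 * v 0) = s 0 * t 1 + s 1 * t 0 := by
    simpa [quadCoords] using congrFun hk 2
  -- evaluate both forms at `(u₁, -u₀)`, where the form of `(u, v)` vanishes
  have hroot : (s 0 * u 1 - s 1 * u 0) * (t 0 * u 1 - t 1 * u 0) = 0 := by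
    linear_combination u 0 * u 1 * h₂ - u 1 ^ 2 * h₀ - u 0 ^ 2 * h₁
  simp only [mk_eq_mk_iff_mul_eq_mul]
  exact (mul_eq_zero.mp hroot).imp sub_eq_zero.mp sub_eq_zero.mp

theorem quadMap_eq_quadMap_iff (x y x' y' : ℙ ℂ (Fin 2 → ℂ)) :
    quadMap (x, y) = quadMap (x', y') ↔ (x, y) = (x', y') ∨ (x, y) = (y', x') := by
  refine ⟨fun h => ?_, ?_⟩
  · have h₁ : x = x' ∨ y = x' := eq_or_eq_of_quadMap_eq h
    have h₂ : x = y' ∨ y = y' := eq_or_eq_of_quadMap_eq (h.trans (quadMap_swap y' x'))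
    have h₃ : x' = x ∨ y' = x := eq_or_eq_of_quadMap_eq h.symm
    have h₄ : x' = y ∨ y' = y := eq_or_eq_of_quadMap_eq (h.symm.trans (quadMap_swap y x))
    simp only [Prod.mk.injEq]
    grind
  · rintro (h | h) <;> simp only [h, quadMap_swap]

/-- the assignment `([s₀:s₁],[t₀:t₁]) ↦ [s₀t₀ : s₁t₁ : s₀t₁+s₁t₀]` gives a
well-defined map `ℙ¹(ℂ) × ℙ¹(ℂ) → ℙ²(ℂ)` (the coordinates never vanish simultaneously on
nonzero representatives), which is surjective and identifies `(x,y)` with `(x',y')` exactly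
when `(x,y) = (x',y')` or `(x,y) = (y',x')`. -/
theorem stmt3 :
    ∃ φ : ℙ ℂ (Fin 2 → ℂ) × ℙ ℂ (Fin 2 → ℂ) → ℙ ℂ (Fin 3 → ℂ),
      (∀ (s t : Fin 2 → ℂ) (hs : s ≠ 0) (ht : t ≠ 0),
        ∃ h : quadCoords s t ≠ 0,
          φ (Projectivization.mk ℂ s hs, Projectivization.mk ℂ t ht) =
            Projectivization.mk ℂ (quadCoords s t) h) ∧
      Function.Surjective φ ∧
      (∀ x y x' y' : ℙ ℂ (Fin 2 → ℂ),
        φ (x, y) = φ (x', y') ↔ (x, y) = (x', y') ∨ (x, y) = (y', x')) :=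
  ⟨quadMap, fun _ _ hs ht => ⟨quadCoords_ne_zero hs ht, quadMap_mk hs ht⟩, quadMap_surjective,
    quadMap_eq_quadMap_iff⟩
end

section
/- Let B be the symmetric bilinear form on ℝ³ whose Gram matrix in the standard basis is [[1/2, 1/2, 0], [1/2, 0, 0], [0, 0, −1/2]], and for each natural number n set D_n := (2n(n+1), −2n, 1−2n²) ∈ ℝ³. Then for every n ≥ 0 one has B(D_n, D_n) = −1/2 and B(D_n, k) = −1, where k := (−2, 0, 2). -/
open scoped Matrix

/-- The symmetric bilinear form on `ℝ³` with Gram matrix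
`[[1/2, 1/2, 0], [1/2, 0, 0], [0, 0, −1/2]]` in the standard basis. -/
noncomputable def interForm (x y : Fin 3 → ℝ) : ℝ :=
  x ⬝ᵥ (Matrix.mulVec !![(1:ℝ)/2, 1/2, 0; 1/2, 0, 0; 0, 0, -1/2] y)

/-- The classes `D_n = 2n(n+1)E₁ − 2nE_{(12)(34)} + (1−2n²)E` in coordinates. -/
noncomputable def Dclass (n : ℕ) : Fin 3 → ℝ :=
  ![2 * n * (n + 1), -2 * n, 1 - 2 * (n : ℝ) ^ 2]

/-- for every `n ≥ 0`, `B(D_n, D_n) = −1/2` and `B(D_n, k) = −1`, where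
`k = (−2, 0, 2)` represents the canonical class. -/
theorem stmt7 (n : ℕ) :
    interForm (Dclass n) (Dclass n) = -(1 / 2) ∧
      interForm (Dclass n) ![(-2 : ℝ), 0, 2] = -1 := by
  constructor <;>
  · simp [interForm, Dclass, dotProduct, Matrix.mulVec, Fin.sum_univ_three, Matrix.vecHead, Matrix.vecTail]
    ring
end
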